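/- arXiv:2504.20600 — 9 statements merged into one kernel-verified Lean document; each statement's English description precedes it below -/
import Mathlib

section
/- Let x₁ ≥ x₂ ≥ ... ≥ x_m be a citation vector with partial sums S_k, extended by S_k = S_m for k > m. If S_m ≥ (m+1)², then the g-index satisfies g = m, and the unconstrained index satisfies g* = ⌊√S_m⌋ ≥ m + 1. -/
open Finset

/-- Partial sum `S_k = x₁ + ⋯ + x_k` of a citation vector, with the natural
extension `S_k = S_m` for `k > m`. -/
def pSum {m : ℕ} (x : Fin m → ℕ) (k : ℕ) : ℕ :=
  ∑ i : Fin m, if (i : ℕ) < k then x i else 0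

/-- `m*(j)`: the number of papers with at least `j` citations. -/
def mStar {m : ℕ} (x : Fin m → ℕ) (j : ℕ) : ℕ :=
  (Finset.univ.filter fun i => j ≤ x i).card

/-- The Hirsch `h`-index: `h = max {j ≥ 1 : m*(j) ≥ j}` (max ∅ = 0). -/
noncomputable def hIndex {m : ℕ} (x : Fin m → ℕ) : ℕ :=
  sSup {j : ℕ | 1 ≤ j ∧ j ≤ mStar x j}

/-- The Egghe `g`-index: `g = max {1 ≤ k ≤ m : S_k ≥ k²}` (max ∅ = 0). -/
noncomputable def gIndex {m : ℕ} (x : Fin m → ℕ) : ℕ :=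
  sSup {k : ℕ | 1 ≤ k ∧ k ≤ m ∧ k ^ 2 ≤ pSum x k}

/-- The unconstrained `g*`-index: `g* = max {k ≥ 1 : S_k ≥ k²}` (max ∅ = 0). -/
noncomputable def gStar {m : ℕ} (x : Fin m → ℕ) : ℕ :=
  sSup {k : ℕ | 1 ≤ k ∧ k ^ 2 ≤ pSum x k}

/-- The `ν`-index: `ν = max {j ≥ 1 : Σ_{i : x_i ≥ j} x_i ≥ j²}` (max ∅ = 0). -/
noncomputable def nuIndex {m : ℕ} (x : Fin m → ℕ) : ℕ :=
  sSup {j : ℕ | 1 ≤ j ∧ j ^ 2 ≤ ∑ i ∈ Finset.univ.filter (fun i => j ≤ x i), x i}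

/-- The tempered `ν̄`-index: `ν̄ = max {1 ≤ j ≤ m : Σ_{i : x_i ≥ j} x_i ≥ j²}` (max ∅ = 0). -/
noncomputable def nuBar {m : ℕ} (x : Fin m → ℕ) : ℕ :=
  sSup {j : ℕ | 1 ≤ j ∧ j ≤ m ∧ j ^ 2 ≤ ∑ i ∈ Finset.univ.filter (fun i => j ≤ x i), x i}

/-- The parametric index `ν_α = max {j ≥ 1 : Σ_{i : x_i ≥ j} x_i^α ≥ j^(α+1)}` (max ∅ = 0),
with real powers. -/
noncomputable def nuAlpha {m : ℕ} (x : Fin m → ℕ) (α : ℝ) : ℕ :=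
  sSup {j : ℕ | 1 ≤ j ∧
    (j : ℝ) ^ (α + 1) ≤ ∑ i ∈ Finset.univ.filter (fun i => j ≤ x i), (x i : ℝ) ^ α}

/-- Extension of a finite citation vector by fictitious zeros. -/
def extByZero {m : ℕ} (x : Fin m → ℕ) (i : ℕ) : ℕ :=
  if h : i < m then x ⟨i, h⟩ else 0

section CitationVector

variable {m : ℕ} (x : Fin m → ℕ)

theorem pSum_zero : pSum x 0 = 0 := by
  simp [pSum]

theorem pSum_le_pSum_length (k : ℕ) : pSum x k ≤ pSum x m :=
  sum_le_sum fun i _ => by split_ifs <;> simp_all [i.isLt]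

theorem pSum_eq_of_length_le {k : ℕ} (hk : m ≤ k) : pSum x k = pSum x m :=
  sum_congr rfl fun i _ => by simp [i.isLt, i.isLt.trans_le hk]

theorem gIndex_eq_length (hm : 1 ≤ m) (h : m ^ 2 ≤ pSum x m) : gIndex x = m :=
  IsGreatest.csSup_eq ⟨⟨hm, le_rfl, h⟩, fun _ hk => hk.2.1⟩

theorem gStar_eq_sqrt_pSum (hpos : 0 < pSum x m) (h : m ^ 2 ≤ pSum x m) :
    gStar x = Nat.sqrt (pSum x m) := by
  have hm_le : m ≤ Nat.sqrt (pSum x m) := Nat.le_sqrt'.mpr h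
  refine IsGreatest.csSup_eq ⟨⟨Nat.sqrt_pos.mpr hpos, ?_⟩, ?_⟩
  -- past the end of the vector the partial sums are constant, so `S_{⌊√S_m⌋} = S_m`
  · rw [pSum_eq_of_length_le x hm_le]
    exact Nat.sqrt_le' _
  · rintro k ⟨-, hk⟩
    exact Nat.le_sqrt'.mpr (hk.trans (pSum_le_pSum_length x k))

end CitationVector

theorem stmt3_general {m : ℕ} (x : Fin m → ℕ)
    (hS : (m + 1) ^ 2 ≤ pSum x m) :
    gIndex x = m ∧ gStar x = Nat.sqrt (pSum x m) ∧ m + 1 ≤ gStar x := by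
  have hm : 1 ≤ m := Nat.pos_of_ne_zero fun h => by
    subst h
    simp [pSum_zero] at hS
  have hmS : m ^ 2 ≤ pSum x m := (Nat.pow_le_pow_left m.le_succ 2).trans hS
  have hgStar := gStar_eq_sqrt_pSum x (lt_of_lt_of_le (by positivity) hS) hmS
  exact ⟨gIndex_eq_length x hm hmS, hgStar, hgStar ▸ Nat.le_sqrt'.mpr hS⟩

theorem stmt3 {m : ℕ} (hm : 1 ≤ m) (x : Fin m → ℕ) (hx : Antitone x)
    (hS : (m + 1) ^ 2 ≤ pSum x m) :
    gIndex x = m ∧ gStar x = Nat.sqrt (pSum x m) ∧ m + 1 ≤ gStar x :=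
  stmt3_general x hS
end

section
/- For every citation vector x₁ ≥ x₂ ≥ ... ≥ x_m, the h-index is not larger than the ν-index: h ≤ ν. -/
open Finset

theorem mStar_mul_le_sum_filter {m : ℕ} (x : Fin m → ℕ) (j : ℕ) :
    mStar x j * j ≤ ∑ i ∈ Finset.univ.filter (fun i => j ≤ x i), x i := by
  rw [mStar, ← smul_eq_mul, ← Finset.sum_const]
  exact Finset.sum_le_sum fun i hi => (Finset.mem_filter.mp hi).2

theorem sq_le_sum_filter_of_le_mStar {m : ℕ} (x : Fin m → ℕ) {j : ℕ} (hj : j ≤ mStar x j) :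
    j ^ 2 ≤ ∑ i ∈ Finset.univ.filter (fun i => j ≤ x i), x i :=
  calc j ^ 2 = j * j := sq j
    _ ≤ mStar x j * j := Nat.mul_le_mul_right j hj
    _ ≤ _ := mStar_mul_le_sum_filter x j

theorem bddAbove_nuIndex_set {m : ℕ} (x : Fin m → ℕ) :
    BddAbove {j : ℕ | 1 ≤ j ∧ j ^ 2 ≤ ∑ i ∈ Finset.univ.filter (fun i => j ≤ x i), x i} := by
  refine ⟨∑ i, x i, fun j ⟨_, hj⟩ => ?_⟩
  calc j ≤ j ^ 2 := Nat.le_self_pow two_ne_zero j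
    _ ≤ _ := hj
    _ ≤ ∑ i, x i := Finset.sum_le_sum_of_subset (Finset.filter_subset _ _)

theorem stmt5_general {m : ℕ} (x : Fin m → ℕ) :
    hIndex x ≤ nuIndex x :=
  csSup_le_csSup' (bddAbove_nuIndex_set x) fun _ ⟨hj1, hj⟩ =>
    ⟨hj1, sq_le_sum_filter_of_le_mStar x hj⟩

theorem stmt5 {m : ℕ} (hm : 1 ≤ m) (x : Fin m → ℕ) (hx : Antitone x) :
    hIndex x ≤ nuIndex x :=
  stmt5_general x
end

section
/- For every citation vector x₁ ≥ x₂ ≥ ... ≥ x_m, the ν-index is not larger than the unconstrained g*-index: ν ≤ g*. -/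
open Finset

lemma key_le {m : ℕ} (x : Fin m → ℕ) (hx : Antitone x) (j : ℕ)
    (h : j ^ 2 ≤ ∑ i ∈ Finset.univ.filter (fun i => j ≤ x i), x i) :
    j ^ 2 ≤ pSum x j := by
  have hpsum : pSum x j = ∑ i ∈ Finset.univ.filter (fun i : Fin m => (i : ℕ) < j), x i :=
    (Finset.sum_filter _ _).symm
  by_cases hc : ∀ i ∈ Finset.univ.filter (fun i : Fin m => j ≤ x i), (i : ℕ) < j
  · refine h.trans ?_
    rw [hpsum]
    apply Finset.sum_le_sum_of_subset
    intro i hi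
    simp only [Finset.mem_filter, Finset.mem_univ, true_and] at hi ⊢
    exact hc i (by simp [hi])
  · push_neg at hc
    obtain ⟨i, hi, hji⟩ := hc
    simp only [Finset.mem_filter, Finset.mem_univ, true_and] at hi
    have hjm : j < m := lt_of_le_of_lt hji i.isLt
    have h0m : 0 < m := lt_of_le_of_lt (Nat.zero_le j) hjm
    have hbig : ∀ i' : Fin m, (i' : ℕ) < j → j ≤ x i' := by
      intro i' hi'
      have hle : i' ≤ i := Fin.le_def.mpr (le_trans (le_of_lt hi') hji)
      exact le_trans hi (hx hle)
    have hcard : j ≤ (Finset.univ.filter (fun i : Fin m => (i : ℕ) < j)).card := by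
      have hinj := Finset.card_le_card_of_injOn
        (f := fun t : ℕ => if ht : t < j then (⟨t, ht.trans hjm⟩ : Fin m) else ⟨0, h0m⟩)
        (s := Finset.range j) (t := Finset.univ.filter (fun i : Fin m => (i : ℕ) < j))
        ?_ ?_
      · simpa using hinj
      · intro t ht
        have ht' : t < j := Finset.mem_range.mp ht
        simp only [Finset.mem_coe, Finset.mem_filter, Finset.mem_univ, true_and, dif_pos ht']
        exact ht'
      · intro a ha b hb hab
        have ha' : a < j := by simpa using ha
        have hb' : b < j := by simpa using hb
        have := congrArg Fin.val hab
        simpa [ha', hb'] using this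
    rw [hpsum]
    calc j ^ 2 = j * j := sq j
    _ ≤ (Finset.univ.filter (fun i : Fin m => (i : ℕ) < j)).card * j :=
        Nat.mul_le_mul_right j hcard
    _ = ∑ i ∈ Finset.univ.filter (fun i : Fin m => (i : ℕ) < j), j := by
        rw [Finset.sum_const, smul_eq_mul]
    _ ≤ ∑ i ∈ Finset.univ.filter (fun i : Fin m => (i : ℕ) < j), x i := by
        apply Finset.sum_le_sum
        intro i hi
        exact hbig i (by simpa using hi)

theorem stmt6 {m : ℕ} (hm : 1 ≤ m) (x : Fin m → ℕ) (hx : Antitone x) :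
    nuIndex x ≤ gStar x := by
  rw [nuIndex, gStar]
  apply csSup_le_csSup'
  · refine ⟨∑ i, x i, fun j hj => ?_⟩
    obtain ⟨hj1, hj2⟩ := hj
    calc j ≤ j ^ 2 := Nat.le_self_pow (by norm_num) j
    _ ≤ pSum x j := hj2
    _ ≤ ∑ i, x i := Finset.sum_le_sum (fun i _ => by split <;> simp)
  · rintro j ⟨hj1, hj2⟩
    exact ⟨hj1, key_le x hx j hj2⟩
end

section
/- For every citation vector x₁ ≥ x₂ ≥ ... ≥ x_m, the tempered ν̄-index is not larger than the g-index: ν̄ ≤ g. -/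
open Finset

/-!
For a non-increasing vector, the papers with at least `j` citations form an initial segment.
If that segment has at most `j` papers, its citation sum is bounded by `S_j`; if it is longer,
each of the first `j` papers has at least `j` citations, so `S_j ≥ j²` outright. Either way
`Σ_{x_i ≥ j} x_i ≥ j²` forces `S_j ≥ j²`, so every candidate for `ν̄` is a candidate for `g`.
-/

section

variable {m : ℕ} (x : Fin m → ℕ)

lemma pSum_eq_sum_filter (k : ℕ) :
    pSum x k = ∑ i ∈ univ.filter (fun i : Fin m => (i : ℕ) < k), x i :=
  (sum_filter _ _).symm

lemma sum_filter_le_pSum {j : ℕ} (h : ∀ i : Fin m, j ≤ x i → (i : ℕ) < j) :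
    ∑ i ∈ univ.filter (fun i => j ≤ x i), x i ≤ pSum x j := by
  rw [pSum_eq_sum_filter]
  exact sum_le_sum_of_subset fun i hi => by simpa using h i (by simpa using hi)

lemma mul_self_le_pSum {j : ℕ} (hjm : j ≤ m) (h : ∀ i : Fin m, (i : ℕ) < j → j ≤ x i) :
    j * j ≤ pSum x j := by
  rw [pSum_eq_sum_filter]
  calc j * j = #(univ.filter fun i : Fin m => (i : ℕ) < j) • j := by
        rw [Fin.card_filter_val_lt, min_eq_right hjm, smul_eq_mul]
    _ ≤ _ := card_nsmul_le_sum _ _ _ fun i hi => h i (by simpa using hi)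

lemma sq_le_pSum_of_sq_le_sum_filter (hx : Antitone x) {j : ℕ}
    (h : j ^ 2 ≤ ∑ i ∈ univ.filter (fun i => j ≤ x i), x i) : j ^ 2 ≤ pSum x j := by
  by_cases hlong : ∃ i₀ : Fin m, j ≤ x i₀ ∧ j ≤ (i₀ : ℕ)
  · obtain ⟨i₀, hxi₀, hji₀⟩ := hlong
    rw [sq]
    exact mul_self_le_pSum x (by omega) fun i hi => hxi₀.trans (hx (by omega : i ≤ i₀))
  · push Not at hlong
    exact h.trans (sum_filter_le_pSum x hlong)

end

theorem stmt8_general {m : ℕ} (x : Fin m → ℕ) (hx : Antitone x) :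
    nuBar x ≤ gIndex x :=
  csSup_le_csSup' ⟨m, fun _ hk => hk.2.1⟩ fun _ ⟨hj1, hjm, hj⟩ =>
    ⟨hj1, hjm, sq_le_pSum_of_sq_le_sum_filter x hx hj⟩

theorem stmt8 {m : ℕ} (hm : 1 ≤ m) (x : Fin m → ℕ) (hx : Antitone x) :
    nuBar x ≤ gIndex x :=
  stmt8_general x hx
end

section
/- Let x₁ ≥ x₂ ≥ ... ≥ x_m be a citation vector, h its h-index and ν its ν-index, with m*(j) = #{i : x_i ≥ j} and S_k = x₁ + ... + x_k (S_0 = 0). Then h = ν if and only if S_{m*(h+1)} < (h+1)². -/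
open Finset

/-!
The sum of the `x i` with `x i ≥ j` decreases in `j` while `j²` increases, so the set defining `ν`
is an initial segment of `{1, 2, …}` and `h + 1 ≤ ν` iff `(h + 1)² ≤ Σ_{x i ≥ h + 1} x i`; for a
sorted vector that sum is `S_{m*(h+1)}`. Moreover `h ≤ ν`, since `h` papers with at least `h`
citations each already carry `h²` citations.
-/

namespace CitationVector

variable {m : ℕ} (x : Fin m → ℕ)

theorem antitone_sum_filter : Antitone fun j => ∑ i ∈ univ.filter (fun i => j ≤ x i), x i :=
  fun _ _ hjj => sum_le_sum_of_subset fun _ hi => by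
    simp only [mem_filter, mem_univ, true_and] at hi ⊢
    omega

theorem le_apply_iff_lt_mStar (hx : Antitone x) (j : ℕ) (i : Fin m) :
    j ≤ x i ↔ (i : ℕ) < mStar x j := by
  constructor
  · intro hji
    have hsub : Iic i ⊆ univ.filter fun i' => j ≤ x i' := fun i' hi' =>
      mem_filter.mpr ⟨mem_univ _, hji.trans (hx (mem_Iic.mp hi'))⟩
    exact (Fin.card_Iic i).symm.trans_le (card_le_card hsub)
  · intro hlt
    by_contra hni
    have hsub : (univ.filter fun i' => j ≤ x i') ⊆ Iio i := fun i' hi' =>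
      mem_Iio.mpr (lt_of_not_ge fun hge => hni ((mem_filter.mp hi').2.trans (hx hge)))
    have hcard := card_le_card hsub
    rw [Fin.card_Iio] at hcard
    exact absurd hlt (not_lt.mpr hcard)

theorem pSum_mStar (hx : Antitone x) (j : ℕ) :
    pSum x (mStar x j) = ∑ i ∈ univ.filter (fun i => j ≤ x i), x i := by
  rw [pSum, ← sum_filter]
  exact sum_congr (filter_congr fun i _ => (le_apply_iff_lt_mStar x hx j i).symm) fun _ _ => rfl

theorem sq_le_sum_filter_of_le_mStar {j : ℕ} (hj : j ≤ mStar x j) :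
    j ^ 2 ≤ ∑ i ∈ univ.filter (fun i => j ≤ x i), x i :=
  calc j ^ 2 ≤ mStar x j * j := by rw [sq]; exact Nat.mul_le_mul_right j hj
    _ = (univ.filter fun i => j ≤ x i).card • j := rfl
    _ ≤ _ := card_nsmul_le_sum _ _ _ fun _ hi => (mem_filter.mp hi).2

theorem hIndex_le_mStar : hIndex x ≤ mStar x (hIndex x) := by
  rcases Nat.eq_zero_or_pos (hIndex x) with h0 | hpos
  · rw [h0]; exact Nat.zero_le _
  · have hne : {j : ℕ | 1 ≤ j ∧ j ≤ mStar x j}.Nonempty :=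
      Set.nonempty_iff_ne_empty.mpr fun hempty => by
        rw [hIndex, hempty, csSup_empty] at hpos
        exact absurd hpos (lt_irrefl 0)
    have hbdd : BddAbove {j : ℕ | 1 ≤ j ∧ j ≤ mStar x j} :=
      ⟨m, fun j hj => hj.2.trans ((card_filter_le _ _).trans (card_fin m).le)⟩
    exact (Nat.sSup_mem hne hbdd).2

theorem bddAbove_nuIndex_set :
    BddAbove {j : ℕ | 1 ≤ j ∧ j ^ 2 ≤ ∑ i ∈ univ.filter (fun i => j ≤ x i), x i} :=
  ⟨∑ i, x i, fun j hj =>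
    (Nat.le_self_pow two_ne_zero j).trans <|
      hj.2.trans (sum_le_sum_of_subset (filter_subset _ _))⟩

theorem le_nuIndex_iff {j : ℕ} (hj : 1 ≤ j) :
    j ≤ nuIndex x ↔ j ^ 2 ≤ ∑ i ∈ univ.filter (fun i => j ≤ x i), x i := by
  constructor
  · intro hle
    have hne : {j : ℕ | 1 ≤ j ∧ j ^ 2 ≤ ∑ i ∈ univ.filter (fun i => j ≤ x i), x i}.Nonempty :=
      Set.nonempty_iff_ne_empty.mpr fun hempty => by
        rw [nuIndex, hempty, csSup_empty] at hle
        exact absurd (hj.trans hle) (by decide)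
    have hmem := Nat.sSup_mem hne (bddAbove_nuIndex_set x)
    calc j ^ 2 ≤ nuIndex x ^ 2 := Nat.pow_le_pow_left hle 2
      _ ≤ _ := hmem.2
      _ ≤ _ := antitone_sum_filter x hle
  · exact fun hsq => le_csSup (bddAbove_nuIndex_set x) ⟨hj, hsq⟩

theorem hIndex_le_nuIndex : hIndex x ≤ nuIndex x := by
  rcases Nat.eq_zero_or_pos (hIndex x) with h0 | hpos
  · rw [h0]; exact Nat.zero_le _
  · exact (le_nuIndex_iff x hpos).mpr (sq_le_sum_filter_of_le_mStar x (hIndex_le_mStar x))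

end CitationVector

open CitationVector in
theorem stmt9_general {m : ℕ} (x : Fin m → ℕ) (hx : Antitone x) :
    hIndex x = nuIndex x ↔
      pSum x (mStar x (hIndex x + 1)) < (hIndex x + 1) ^ 2 := by
  rw [pSum_mStar x hx, ← not_le, ← le_nuIndex_iff x (Nat.le_add_left 1 _)]
  have hle := hIndex_le_nuIndex x
  omega

theorem stmt9 {m : ℕ} (hm : 1 ≤ m) (x : Fin m → ℕ) (hx : Antitone x) :
    hIndex x = nuIndex x ↔
      pSum x (mStar x (hIndex x + 1)) < (hIndex x + 1) ^ 2 :=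
  stmt9_general x hx
end

section
/- Let x₁ ≥ x₂ ≥ ... ≥ x_m be a citation vector, ν its ν-index and g* its unconstrained g*-index, with S_k = x₁ + ... + x_k extended by S_k = S_m for k > m. Then ν = g* if and only if S_{ν+1} < (ν+1)². -/
open Finset

section Aux

variable {m : ℕ} {x : Fin m → ℕ}

lemma extByZero_anti (hx : Antitone x) : Antitone (extByZero x) := by
  intro i j hij
  unfold extByZero
  split_ifs with hj hi hi
  · exact hx (Fin.mk_le_mk.mpr hij)
  · exact absurd (lt_of_le_of_lt hij hj) hi
  · exact Nat.zero_le _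
  · exact Nat.zero_le _

lemma sum_ite_coe_eq (x : Fin m → ℕ) (k : ℕ) :
    (∑ i : Fin m, if (i : ℕ) = k then x i else 0) = extByZero x k := by
  by_cases hk : k < m
  · have h := Finset.sum_ite_eq' (Finset.univ : Finset (Fin m)) (⟨k, hk⟩ : Fin m) x
    simp only [Finset.mem_univ, if_true] at h
    rw [extByZero, dif_pos hk, ← h]
    apply Finset.sum_congr rfl
    intro i _
    by_cases h1 : (i : ℕ) = k
    · have h2 : i = (⟨k, hk⟩ : Fin m) := Fin.ext h1
      simp [h1, h2]
    · have h2 : i ≠ (⟨k, hk⟩ : Fin m) := by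
        intro h3; exact h1 (by rw [h3])
      simp [h1, h2]
  · have h1 : ∀ i : Fin m, ¬ ((i : ℕ) = k) := by
      intro i h2; exact hk (h2 ▸ i.isLt)
    rw [extByZero, dif_neg hk]
    simp [h1]

lemma pSum_succ (x : Fin m → ℕ) (k : ℕ) :
    pSum x (k + 1) = pSum x k + extByZero x k := by
  have h : ∀ i : Fin m, (if (i : ℕ) < k + 1 then x i else 0)
      = (if (i : ℕ) < k then x i else 0) + (if (i : ℕ) = k then x i else 0) := by
    intro i
    by_cases h1 : (i : ℕ) < k
    · simp [h1, Nat.lt_succ_of_lt h1, Nat.ne_of_lt h1]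
    · by_cases h2 : (i : ℕ) = k
      · simp [h1, h2]
      · have h3 : ¬ (i : ℕ) < k + 1 := by omega
        simp [h1, h2, h3]
  calc pSum x (k + 1)
      = ∑ i : Fin m, ((if (i : ℕ) < k then x i else 0) + (if (i : ℕ) = k then x i else 0)) :=
        Finset.sum_congr rfl fun i _ => h i
    _ = pSum x k + ∑ i : Fin m, (if (i : ℕ) = k then x i else 0) := by
        rw [Finset.sum_add_distrib]; rfl
    _ = pSum x k + extByZero x k := by rw [sum_ite_coe_eq]

lemma pSum_eq_range (x : Fin m → ℕ) (k : ℕ) :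
    pSum x k = ∑ i ∈ Finset.range k, extByZero x i := by
  induction k with
  | zero => simp [pSum]
  | succ n ih => rw [Finset.sum_range_succ, ← ih, pSum_succ]

lemma pSum_mono (x : Fin m → ℕ) : Monotone (pSum x) := by
  intro a b hab
  rw [pSum_eq_range, pSum_eq_range]
  exact Finset.sum_le_sum_of_subset (Finset.range_subset_range.mpr hab)

lemma pSum_le_total (x : Fin m → ℕ) (k : ℕ) : pSum x k ≤ ∑ i : Fin m, x i := by
  apply Finset.sum_le_sum
  intro i _
  split_ifs <;> simp

lemma pSum_tail_le (hx : Antitone x) {j k : ℕ} (hjk : j ≤ k) :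
    pSum x k ≤ pSum x j + (k - j) * extByZero x j := by
  have h1 : pSum x k = pSum x j + ∑ i ∈ Finset.Ico j k, extByZero x i := by
    rw [pSum_eq_range, pSum_eq_range, Finset.range_eq_Ico,
      ← Finset.sum_Ico_consecutive _ (Nat.zero_le j) hjk, Finset.range_eq_Ico]
  rw [h1]
  have h2 : ∑ i ∈ Finset.Ico j k, extByZero x i ≤ ∑ _i ∈ Finset.Ico j k, extByZero x j :=
    Finset.sum_le_sum fun i hi => extByZero_anti hx (Finset.mem_Ico.mp hi).1
  have h3 : ∑ _i ∈ Finset.Ico j k, extByZero x j = (k - j) * extByZero x j := by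
    rw [Finset.sum_const, Nat.card_Ico, smul_eq_mul]
  omega

lemma pSum_ge_head (hx : Antitone x) (j : ℕ) :
    j * extByZero x j ≤ pSum x j := by
  rw [pSum_eq_range]
  calc j * extByZero x j = ∑ _i ∈ Finset.range j, extByZero x j := by
        rw [Finset.sum_const, Finset.card_range, smul_eq_mul]
    _ ≤ ∑ i ∈ Finset.range j, extByZero x i :=
        Finset.sum_le_sum fun i hi =>
          extByZero_anti hx (le_of_lt (Finset.mem_range.mp hi))

/-- Averaging: if `S_k ≥ k²` and `j ≤ k` then `S_j ≥ j·k`. -/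
lemma pSum_avg (hx : Antitone x) {j k : ℕ} (hjk : j ≤ k) (hk1 : 1 ≤ k)
    (hk : k ^ 2 ≤ pSum x k) : j * k ≤ pSum x j := by
  set e := extByZero x j with he
  have h1 : j * pSum x k ≤ k * pSum x j := by
    have t1 : j * pSum x k ≤ j * (pSum x j + (k - j) * e) :=
      Nat.mul_le_mul_left _ (pSum_tail_le hx hjk)
    have t2 : j * (pSum x j + (k - j) * e) = j * pSum x j + (k - j) * (j * e) := by ring
    have t3 : (k - j) * (j * e) ≤ (k - j) * pSum x j :=
      Nat.mul_le_mul_left _ (pSum_ge_head hx j)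
    have t4 : j * pSum x j + (k - j) * pSum x j = k * pSum x j := by
      have : j + (k - j) = k := by omega
      calc j * pSum x j + (k - j) * pSum x j = (j + (k - j)) * pSum x j := by ring
        _ = k * pSum x j := by rw [this]
    omega
  have h2 : k * (j * k) ≤ k * pSum x j := by
    calc k * (j * k) = j * k ^ 2 := by ring
      _ ≤ j * pSum x k := Nat.mul_le_mul_left _ hk
      _ ≤ k * pSum x j := h1
  exact Nat.le_of_mul_le_mul_left h2 (by omega)

lemma card_coe_lt (t : ℕ) :
    (Finset.univ.filter fun i : Fin m => (i : ℕ) < t).card = min t m := by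
  rcases le_or_gt m t with h | h
  · have h1 : (Finset.univ.filter fun i : Fin m => (i : ℕ) < t) = Finset.univ := by
      ext i; simp [lt_of_lt_of_le i.isLt h]
    rw [h1, Finset.card_univ, Fintype.card_fin, Nat.min_eq_right h]
  · have h1 : (Finset.univ.filter fun i : Fin m => (i : ℕ) < t)
        = Finset.Iio (⟨t, h⟩ : Fin m) := by
      ext i
      simp [Finset.mem_Iio, Fin.lt_def]
    rw [h1, Fin.card_Iio, Nat.min_eq_left (le_of_lt h)]

lemma mStar_le (x : Fin m → ℕ) (j : ℕ) : mStar x j ≤ m := by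
  rw [mStar]
  calc (Finset.univ.filter fun i : Fin m => j ≤ x i).card
      ≤ (Finset.univ : Finset (Fin m)).card := Finset.card_filter_le _ _
    _ = m := by rw [Finset.card_univ, Fintype.card_fin]

/-- For an antitone vector, the papers with ≥ j citations are an initial segment. -/
lemma filter_eq_initial (hx : Antitone x) (j : ℕ) :
    Finset.univ.filter (fun i : Fin m => j ≤ x i)
      = Finset.univ.filter (fun i : Fin m => (i : ℕ) < mStar x j) := by
  ext i
  simp only [Finset.mem_filter, Finset.mem_univ, true_and]
  constructor
  · intro hi
    have hsub : (Finset.univ.filter fun p : Fin m => (p : ℕ) < (i : ℕ) + 1)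
        ⊆ Finset.univ.filter (fun i : Fin m => j ≤ x i) := by
      intro p hp
      simp only [Finset.mem_filter, Finset.mem_univ, true_and] at hp ⊢
      exact le_trans hi (hx (Fin.le_def.mpr (Nat.lt_succ_iff.mp hp)))
    have h2 := Finset.card_le_card hsub
    rw [card_coe_lt] at h2
    have h3 : min ((i : ℕ) + 1) m = (i : ℕ) + 1 := Nat.min_eq_left i.isLt
    rw [h3] at h2
    have hc : (Finset.univ.filter (fun i : Fin m => j ≤ x i)).card = mStar x j := rfl
    omega
  · intro hi
    by_contra hxi
    have hsub : Finset.univ.filter (fun i : Fin m => j ≤ x i)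
        ⊆ Finset.univ.filter fun p : Fin m => (p : ℕ) < (i : ℕ) := by
      intro p hp
      simp only [Finset.mem_filter, Finset.mem_univ, true_and] at hp ⊢
      by_contra hpi
      exact hxi (le_trans hp (hx (Fin.le_def.mpr (Nat.le_of_not_lt hpi))))
    have h2 := Finset.card_le_card hsub
    rw [card_coe_lt] at h2
    have hc : (Finset.univ.filter (fun i : Fin m => j ≤ x i)).card = mStar x j := rfl
    have h3 : min (i : ℕ) m ≤ (i : ℕ) := Nat.min_le_left _ _
    omega

lemma filter_sum_eq (hx : Antitone x) (j : ℕ) :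
    ∑ i ∈ Finset.univ.filter (fun i => j ≤ x i), x i = pSum x (mStar x j) := by
  rw [filter_eq_initial hx j, Finset.sum_filter]
  rfl

/-- Membership transfer from the ν-set into the g*-set. -/
lemma nu_mem_to_g (hx : Antitone x) {j : ℕ} (hj : 1 ≤ j)
    (hsum : j ^ 2 ≤ ∑ i ∈ Finset.univ.filter (fun i => j ≤ x i), x i) :
    j ^ 2 ≤ pSum x j := by
  rw [filter_sum_eq hx j] at hsum
  set c := mStar x j with hc
  rcases le_or_gt j c with h | h
  · have hcm : c ≤ m := mStar_le x j
    have hjm : j ≤ m := le_trans h hcm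
    have hone : ∀ i ∈ Finset.univ.filter (fun i : Fin m => (i : ℕ) < j), j ≤ x i := by
      intro i hi
      simp only [Finset.mem_filter, Finset.mem_univ, true_and] at hi
      have h2 : i ∈ Finset.univ.filter (fun i : Fin m => (i : ℕ) < c) := by
        simp only [Finset.mem_filter, Finset.mem_univ, true_and]
        exact lt_of_lt_of_le hi h
      rw [← filter_eq_initial hx j] at h2
      exact (Finset.mem_filter.mp h2).2
    have h3 : (Finset.univ.filter fun i : Fin m => (i : ℕ) < j).card * j
        ≤ ∑ i ∈ Finset.univ.filter (fun i : Fin m => (i : ℕ) < j), x i := by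
      calc (Finset.univ.filter fun i : Fin m => (i : ℕ) < j).card * j
          = ∑ _i ∈ Finset.univ.filter (fun i : Fin m => (i : ℕ) < j), j := by
            rw [Finset.sum_const, smul_eq_mul]
        _ ≤ ∑ i ∈ Finset.univ.filter (fun i : Fin m => (i : ℕ) < j), x i :=
            Finset.sum_le_sum hone
    rw [card_coe_lt, Nat.min_eq_left hjm] at h3
    have h4 : pSum x j = ∑ i ∈ Finset.univ.filter (fun i : Fin m => (i : ℕ) < j), x i := by
      rw [Finset.sum_filter]; rfl
    rw [h4]
    calc j ^ 2 = j * j := sq j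
      _ ≤ _ := h3
  · exact le_trans hsum (pSum_mono x (le_of_lt h))

lemma bdd_gset (x : Fin m → ℕ) : BddAbove {k : ℕ | 1 ≤ k ∧ k ^ 2 ≤ pSum x k} := by
  refine ⟨∑ i : Fin m, x i, fun k hk => ?_⟩
  obtain ⟨h1, h2⟩ := hk
  have h3 : k ≤ k ^ 2 := by nlinarith
  exact le_trans h3 (le_trans h2 (pSum_le_total x k))

lemma bdd_nuset (x : Fin m → ℕ) :
    BddAbove {j : ℕ | 1 ≤ j ∧ j ^ 2 ≤ ∑ i ∈ Finset.univ.filter (fun i => j ≤ x i), x i} := by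
  refine ⟨∑ i : Fin m, x i, fun k hk => ?_⟩
  obtain ⟨h1, h2⟩ := hk
  have h3 : k ≤ k ^ 2 := by nlinarith
  have h4 : ∑ i ∈ Finset.univ.filter (fun i => k ≤ x i), x i ≤ ∑ i : Fin m, x i :=
    Finset.sum_le_sum_of_subset (Finset.filter_subset _ _)
  exact le_trans h3 (le_trans h2 h4)

end Aux

theorem stmt10 {m : ℕ} (hm : 1 ≤ m) (x : Fin m → ℕ) (hx : Antitone x) :
    nuIndex x = gStar x ↔
      pSum x (nuIndex x + 1) < (nuIndex x + 1) ^ 2 := by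
  set ν := nuIndex x with hνdef
  have hnu_le : ν ≤ gStar x := by
    rcases Nat.eq_zero_or_pos ν with h0 | hpos
    · simp [h0]
    · have hmem : ν ∈ {j : ℕ | 1 ≤ j ∧
          j ^ 2 ≤ ∑ i ∈ Finset.univ.filter (fun i => j ≤ x i), x i} := by
        apply Nat.sSup_mem
        · by_contra hne
          rw [Set.not_nonempty_iff_eq_empty] at hne
          have : ν = 0 := by
            rw [hνdef, nuIndex, hne, csSup_empty]; rfl
          omega
        · exact bdd_nuset x
      have hg : ν ∈ {k : ℕ | 1 ≤ k ∧ k ^ 2 ≤ pSum x k} :=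
        ⟨hmem.1, nu_mem_to_g hx hmem.1 hmem.2⟩
      exact le_csSup (bdd_gset x) hg
  constructor
  · intro heq
    by_contra hge
    push_neg at hge
    have h1 : ν + 1 ∈ {k : ℕ | 1 ≤ k ∧ k ^ 2 ≤ pSum x k} := ⟨by omega, hge⟩
    have h2 : ν + 1 ≤ gStar x := le_csSup (bdd_gset x) h1
    omega
  · intro hlt
    refine le_antisymm hnu_le ?_
    show sSup {k : ℕ | 1 ≤ k ∧ k ^ 2 ≤ pSum x k} ≤ ν
    apply csSup_le'
    intro k hk
    by_contra hk2
    push_neg at hk2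
    have havg : (ν + 1) * k ≤ pSum x (ν + 1) :=
      pSum_avg hx (by omega) (by omega) hk.2
    have h3 : (ν + 1) ^ 2 ≤ (ν + 1) * k := by nlinarith
    omega
end

section
/- For a fixed citation vector x₁ ≥ x₂ ≥ ... ≥ x_m, the index ν_α is a monotone non-decreasing function of the real parameter α ≥ 0; that is, if 0 ≤ α ≤ β then ν_α ≤ ν_β. -/
open Finset

/-!
The set whose supremum is `ν_α` grows with `α`: every `i` counted for `j` has `j ≤ x_i`, so
`j ^ (β - α) * x_i ^ α ≤ x_i ^ β`, and multiplying the `α`-inequality by `j ^ (β - α)` yields the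
`β`-inequality. The sets stay bounded (by `Σ x_i`), so their suprema are ordered as well.
-/

theorem rpow_add_one_le_sum_rpow_of_le {ι : Type*} (s : Finset ι) (f : ι → ℝ) {t α β : ℝ}
    (ht : 0 < t) (hf : ∀ i ∈ s, t ≤ f i) (hαβ : α ≤ β)
    (h : t ^ (α + 1) ≤ ∑ i ∈ s, f i ^ α) :
    t ^ (β + 1) ≤ ∑ i ∈ s, f i ^ β := by
  have termwise : ∀ i ∈ s, t ^ (β - α) * f i ^ α ≤ f i ^ β := by
    intro i hi
    have hfi : 0 < f i := ht.trans_le (hf i hi)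
    calc t ^ (β - α) * f i ^ α
        ≤ f i ^ (β - α) * f i ^ α := by
          gcongr
          exact hf i hi
      _ = f i ^ β := by rw [← Real.rpow_add hfi, sub_add_cancel]
  calc t ^ (β + 1) = t ^ (β - α) * t ^ (α + 1) := by
        rw [← Real.rpow_add ht]; ring_nf
    _ ≤ t ^ (β - α) * ∑ i ∈ s, f i ^ α := by gcongr
    _ = ∑ i ∈ s, t ^ (β - α) * f i ^ α := mul_sum _ _ _
    _ ≤ ∑ i ∈ s, f i ^ β := sum_le_sum termwise

theorem bddAbove_nuAlpha_set {m : ℕ} (x : Fin m → ℕ) (α : ℝ) :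
    BddAbove {j : ℕ | 1 ≤ j ∧
      (j : ℝ) ^ (α + 1) ≤ ∑ i ∈ univ.filter (fun i => j ≤ x i), (x i : ℝ) ^ α} := by
  refine ⟨∑ i, x i, ?_⟩
  rintro j ⟨hj, hsum⟩
  -- the left side is positive, so some `i` with `j ≤ x i` is counted
  have hpos : (0 : ℝ) < (j : ℝ) ^ (α + 1) := Real.rpow_pos_of_pos (by exact_mod_cast hj) _
  obtain ⟨i, hi, -⟩ := exists_ne_zero_of_sum_ne_zero (hpos.trans_le hsum).ne'
  exact (mem_filter.mp hi).2.trans (single_le_sum (fun _ _ => Nat.zero_le _) (mem_univ i))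

theorem stmt13_general {m : ℕ} (x : Fin m → ℕ)
    (α β : ℝ) (hαβ : α ≤ β) :
    nuAlpha x α ≤ nuAlpha x β := by
  refine csSup_le_csSup' (bddAbove_nuAlpha_set x β) ?_
  rintro j ⟨hj, hsum⟩
  refine ⟨hj, rpow_add_one_le_sum_rpow_of_le _ _ (by exact_mod_cast hj) (fun i hi => ?_) hαβ hsum⟩
  exact_mod_cast (mem_filter.mp hi).2

theorem stmt13 {m : ℕ} (hm : 1 ≤ m) (x : Fin m → ℕ) (hx : Antitone x)
    (α β : ℝ) (hα : 0 ≤ α) (hαβ : α ≤ β) :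
    nuAlpha x α ≤ nuAlpha x β :=
  stmt13_general x α β hαβ
end

section
/- Let x₁ ≥ x₂ ≥ ... ≥ x_m be a citation vector with maximum citation x₁, and let ℓ₁ = #{i : x_i = x₁} be the multiplicity of x₁. Then the family ν_α is eventually constant as α → ∞, and its limit ν_∞ = lim_{α→∞} ν_α equals x₁ − 1 if ℓ₁ < x₁, and equals x₁ if ℓ₁ ≥ x₁. -/
open Finset

theorem stmt14 {m : ℕ} (hm : 1 ≤ m) (x : Fin m → ℕ) (hx : Antitone x) :
    ∃ A : ℝ, ∀ α : ℝ, A ≤ α →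
      nuAlpha x α =
        if (Finset.univ.filter fun i => x i = x ⟨0, hm⟩).card < x ⟨0, hm⟩
          then x ⟨0, hm⟩ - 1
          else x ⟨0, hm⟩ := by
  set M := x ⟨0, hm⟩ with hMdef
  have hle : ∀ i, x i ≤ M := fun i => hx (by simp [Fin.le_def])
  by_cases hM0 : M = 0
  · refine ⟨0, fun α hα => ?_⟩
    have hL : ¬ ((Finset.univ.filter fun i => x i = M).card < M) := by simp [hM0]
    rw [if_neg hL, hM0]
    have hemp : {j : ℕ | 1 ≤ j ∧
        (j : ℝ) ^ (α + 1) ≤ ∑ i ∈ Finset.univ.filter (fun i => j ≤ x i), (x i : ℝ) ^ α} = ∅ := by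
      ext j
      simp only [Set.mem_setOf_eq, Set.mem_empty_iff_false, iff_false, not_and]
      intro hj1
      have hf : Finset.univ.filter (fun i : Fin m => j ≤ x i) = ∅ := by
        apply Finset.filter_false_of_mem
        intro i _
        have := hle i
        omega
      rw [hf, Finset.sum_empty]
      have h1 : (1:ℝ) ≤ (j : ℝ) ^ (α + 1) :=
        Real.one_le_rpow (by exact_mod_cast hj1) (by linarith)
      linarith
    rw [nuAlpha, hemp, csSup_empty]
    rfl
  · have hM1 : 1 ≤ M := Nat.one_le_iff_ne_zero.mpr hM0
    set L := (Finset.univ.filter fun i => x i = M).card with hLdef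
    have hL1 : 1 ≤ L := by
      have : (⟨0, hm⟩ : Fin m) ∈ Finset.univ.filter fun i => x i = M := by
        simp [hMdef]
      exact Finset.card_pos.mpr ⟨_, this⟩
    have hev : ∀ᶠ α : ℝ in Filter.atTop,
        0 ≤ α ∧ ∀ j ∈ Finset.Ico 1 M, (j:ℝ) ^ (α + 1) ≤ (M:ℝ) ^ α := by
      refine (Filter.eventually_ge_atTop 0).and ?_
      rw [Finset.eventually_all]
      intro j hj
      obtain ⟨hj1, hjM⟩ := Finset.mem_Ico.mp hj
      have hj0 : (0:ℝ) < j := by exact_mod_cast hj1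
      have hMp : (0:ℝ) < M := by exact_mod_cast hM1
      have hb1 : (j:ℝ)/M < 1 := by
        rw [div_lt_one hMp]; exact_mod_cast hjM
      have hb0 : (0:ℝ) ≤ (j:ℝ)/M := by positivity
      have htend := tendsto_rpow_atTop_of_base_lt_one ((j:ℝ)/M) (by linarith) hb1
      have hevl := htend.eventually_lt_const (show (0:ℝ) < 1/j by positivity)
      filter_upwards [hevl] with α h1
      have hMα : (0:ℝ) < (M:ℝ) ^ α := Real.rpow_pos_of_pos hMp α
      rw [Real.div_rpow hj0.le hMp.le] at h1
      have h2 : (j:ℝ) ^ α * (j:ℝ) < 1 * (M:ℝ) ^ α := (div_lt_div_iff₀ hMα hj0).mp h1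
      rw [Real.rpow_add hj0, Real.rpow_one]
      linarith
    obtain ⟨A, hA⟩ := Filter.eventually_atTop.mp hev
    refine ⟨A, fun α hα => ?_⟩
    obtain ⟨hα0, hpow⟩ := hA α hα
    have hMp : (0:ℝ) < M := by exact_mod_cast hM1
    have hMα : (0:ℝ) < (M:ℝ) ^ α := Real.rpow_pos_of_pos hMp α
    have hfM : Finset.univ.filter (fun i : Fin m => M ≤ x i)
        = Finset.univ.filter (fun i => x i = M) := by
      ext i
      simp only [Finset.mem_filter, Finset.mem_univ, true_and]
      exact ⟨fun h => le_antisymm (hle i) h, fun h => h.ge⟩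
    have hsumM : ∑ i ∈ Finset.univ.filter (fun i : Fin m => M ≤ x i), (x i : ℝ) ^ α
        = L * (M:ℝ) ^ α := by
      rw [hfM]
      rw [Finset.sum_congr rfl (fun i hi => by
        rw [(Finset.mem_filter.mp hi).2] : ∀ i ∈ Finset.univ.filter (fun i => x i = M),
          (x i : ℝ) ^ α = (M:ℝ) ^ α)]
      rw [Finset.sum_const, nsmul_eq_mul]
    have hub : ∀ j ∈ {j : ℕ | 1 ≤ j ∧
        (j : ℝ) ^ (α + 1) ≤ ∑ i ∈ Finset.univ.filter (fun i => j ≤ x i), (x i : ℝ) ^ α},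
        j ≤ M := by
      rintro j ⟨hj1, hj2⟩
      by_contra hjM
      push_neg at hjM
      have hf : Finset.univ.filter (fun i : Fin m => j ≤ x i) = ∅ := by
        apply Finset.filter_false_of_mem
        intro i _
        have := hle i
        omega
      rw [hf, Finset.sum_empty] at hj2
      have h1 : (1:ℝ) ≤ (j : ℝ) ^ (α + 1) :=
        Real.one_le_rpow (by exact_mod_cast hj1) (by linarith)
      linarith
    by_cases hLM : L < M
    · rw [if_pos hLM]
      have hM2 : 2 ≤ M := by omega
      apply IsGreatest.csSup_eq
      constructor
      · refine ⟨by omega, ?_⟩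
        have hj := hpow (M - 1) (Finset.mem_Ico.mpr ⟨by omega, by omega⟩)
        have hsub : Finset.univ.filter (fun i : Fin m => M ≤ x i)
            ⊆ Finset.univ.filter (fun i => M - 1 ≤ x i) := by
          intro i hi
          simp only [Finset.mem_filter, Finset.mem_univ, true_and] at *
          omega
        have hge : ∑ i ∈ Finset.univ.filter (fun i : Fin m => M ≤ x i), (x i : ℝ) ^ α
            ≤ ∑ i ∈ Finset.univ.filter (fun i => M - 1 ≤ x i), (x i : ℝ) ^ α := by
          apply Finset.sum_le_sum_of_subset_of_nonneg hsub
          intro i _ _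
          positivity
        have hL1' : (1:ℝ) ≤ L := by exact_mod_cast hL1
        rw [hsumM] at hge
        nlinarith
      · rintro j hj
        have hjM := hub j hj
        obtain ⟨hj1, hj2⟩ := hj
        rcases Nat.lt_or_ge j M with h | h
        · omega
        · exfalso
          have hjM' : j = M := by omega
          subst hjM'
          rw [hsumM] at hj2
          rw [Real.rpow_add hMp, Real.rpow_one] at hj2
          have hML : (M:ℝ) ≤ L := by
            have := (mul_le_mul_iff_of_pos_right hMα).mp (by linarith [hj2] :
              (M:ℝ) * (M:ℝ) ^ α ≤ (L:ℝ) * (M:ℝ) ^ α)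
            exact this
          have : (L:ℝ) < (M:ℝ) := by exact_mod_cast hLM
          linarith
    · rw [if_neg hLM]
      push_neg at hLM
      apply IsGreatest.csSup_eq
      constructor
      · refine ⟨hM1, ?_⟩
        rw [hsumM, Real.rpow_add hMp, Real.rpow_one]
        have : (M:ℝ) ≤ L := by exact_mod_cast hLM
        nlinarith
      · exact hub
end

section
/- For every citation vector x₁ ≥ x₂ ≥ ... ≥ x_m, the g-index is not larger than the unconstrained g*-index (g ≤ g*), and moreover if g < m then g = g*. -/
open Finset

lemma pSum_eq_of_le {m k : ℕ} (x : Fin m → ℕ) (hk : m ≤ k) : pSum x k = pSum x m := by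
  unfold pSum
  refine Finset.sum_congr rfl fun i _ => ?_
  simp [i.2, i.2.trans_le hk]

lemma pSum_le_sum {m : ℕ} (x : Fin m → ℕ) (k : ℕ) : pSum x k ≤ ∑ i, x i :=
  Finset.sum_le_sum fun i _ => by split <;> simp

lemma le_gIndex {m k : ℕ} (x : Fin m → ℕ) (hk : 1 ≤ k) (hkm : k ≤ m) (hsq : k ^ 2 ≤ pSum x k) :
    k ≤ gIndex x :=
  le_csSup ⟨m, fun _ hj => hj.2.1⟩ ⟨hk, hkm, hsq⟩

lemma le_gStar {m k : ℕ} (x : Fin m → ℕ) (hk : 1 ≤ k) (hsq : k ^ 2 ≤ pSum x k) :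
    k ≤ gStar x := by
  refine le_csSup ⟨∑ i, x i, fun j hj => ?_⟩ ⟨hk, hsq⟩
  calc j ≤ j ^ 2 := Nat.le_self_pow two_ne_zero j
    _ ≤ pSum x j := hj.2
    _ ≤ ∑ i, x i := pSum_le_sum x j

lemma gIndex_le_gStar {m : ℕ} (x : Fin m → ℕ) : gIndex x ≤ gStar x :=
  csSup_le' fun _ ⟨hk, _, hsq⟩ => le_gStar x hk hsq

/-- A witness `k > m` of `g*` would make `m` itself a witness of `g`, since `S_k = S_m`. -/
lemma gStar_le_gIndex_of_lt {m : ℕ} (x : Fin m → ℕ) (hlt : gIndex x < m) :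
    gStar x ≤ gIndex x := by
  refine csSup_le' fun k ⟨hk, hsq⟩ => ?_
  by_cases hkm : k ≤ m
  · exact le_gIndex x hk hkm hsq
  · have hm : m ^ 2 ≤ pSum x m :=
      calc m ^ 2 ≤ k ^ 2 := Nat.pow_le_pow_left (by omega) 2
        _ ≤ pSum x k := hsq
        _ = pSum x m := pSum_eq_of_le x (by omega)
    have := le_gIndex x (by omega) le_rfl hm
    omega

theorem stmt17_general {m : ℕ} (x : Fin m → ℕ) :
    gIndex x ≤ gStar x ∧ (gIndex x < m → gIndex x = gStar x) :=
  ⟨gIndex_le_gStar x, fun hlt => (gIndex_le_gStar x).antisymm (gStar_le_gIndex_of_lt x hlt)⟩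

theorem stmt17 {m : ℕ} (hm : 1 ≤ m) (x : Fin m → ℕ) (hx : Antitone x) :
    gIndex x ≤ gStar x ∧ (gIndex x < m → gIndex x = gStar x) :=
  stmt17_general x
end
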